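/- arXiv:1708.04498 — 4 statements merged into one kernel-verified Lean document; each statement's English description precedes it below -/
import Mathlib

section
/- Let C be a real symmetric n×n matrix and n ≥ 1. There exists an orthogonal matrix W ∈ O(n, ℝ) such that every diagonal entry of W C Wᵀ is equal to (trace C)/n. In particular, the orthonormal PCA basis can be rotated so that the information (variance) along each of the n components is identical. -/
open Matrix

variable {m : Type} [Fintype m] [DecidableEq m]

private lemma sum_split (i : m) (f : m → ℝ) :
    ∑ k, f k = f i + ∑ k : {x // x ≠ i}, f k := by
  rw [Fintype.sum_eq_add_sum_compl i]
  congr 1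
  exact Finset.sum_subtype {i}ᶜ (p := fun x => x ≠ i) (fun x => by simp) f

private lemma exists_rotation {i j : m} (hij : i ≠ j) (C : Matrix m m ℝ) (hC : C.IsSymm)
    {t : ℝ} (h1 : C i i ≤ t) (h2 : t ≤ C j j) :
    ∃ R : Matrix m m ℝ, R * Rᵀ = 1 ∧ (R * C * Rᵀ) i i = t := by
  set f : ℝ → ℝ := fun θ =>
    Real.cos θ ^ 2 * C i i + 2 * (Real.cos θ * Real.sin θ) * C i j + Real.sin θ ^ 2 * C j j
    with hf
  have hcont : ContinuousOn f (Set.Icc 0 (Real.pi / 2)) := by fun_prop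
  have hmem : t ∈ Set.Icc (f 0) (f (Real.pi / 2)) := by
    simp only [hf, Real.cos_zero, Real.sin_zero, Real.cos_pi_div_two, Real.sin_pi_div_two]
    norm_num
    exact ⟨h1, h2⟩
  obtain ⟨θ, -, hθ⟩ := intermediate_value_Icc (by positivity) hcont hmem
  set c := Real.cos θ with hc
  set s := Real.sin θ with hs
  have hcs : c ^ 2 + s ^ 2 = 1 := by rw [add_comm]; exact Real.sin_sq_add_cos_sq θ
  set R : Matrix m m ℝ := fun a b =>
    if a = i then (if b = i then c else if b = j then s else 0)
    else if a = j then (if b = i then -s else if b = j then c else 0)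
    else if b = a then 1 else 0 with hR
  refine ⟨R, ?_, ?_⟩
  · ext a b
    rw [mul_apply]
    simp only [transpose_apply]
    rcases eq_or_ne a i with hai | hai
    · rcases eq_or_ne b i with hbi | hbi
      · rw [Fintype.sum_eq_add i j hij (fun x ⟨hx1, hx2⟩ => by simp [hR, hai, hbi, hx1, hx2])]
        simp [hR, hai, hbi, hij, Ne.symm hij, one_apply, ← sq, hcs]
      · rcases eq_or_ne b j with hbj | hbj
        · rw [Fintype.sum_eq_add i j hij (fun x ⟨hx1, hx2⟩ => by simp [hR, hai, hbj, hx1, hx2])]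
          simp [hR, hai, hbj, hij, Ne.symm hij, one_apply]
          ring
        · rw [Fintype.sum_eq_single b (fun x hx => by simp [hR, hbi, hbj, hx])]
          simp [hR, hai, hbi, hbj, one_apply, Ne.symm hbi]
    · rcases eq_or_ne a j with haj | haj
      · rcases eq_or_ne b i with hbi | hbi
        · rw [Fintype.sum_eq_add i j hij (fun x ⟨hx1, hx2⟩ => by simp [hR, haj, hbi, hx1, hx2])]
          simp [hR, haj, hbi, hij, Ne.symm hij, hai, one_apply]
          ring
        · rcases eq_or_ne b j with hbj | hbj
          · rw [Fintype.sum_eq_add i j hij (fun x ⟨hx1, hx2⟩ => by simp [hR, haj, hbj, hx1, hx2])]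
            simp [hR, haj, hbj, hij, Ne.symm hij, hai, one_apply, ← sq]
            rw [add_comm] at hcs; exact hcs
          · rw [Fintype.sum_eq_single b (fun x hx => by simp [hR, hbi, hbj, hx])]
            simp [hR, haj, hbi, hbj, hai, one_apply, Ne.symm hbj]
      · rw [Fintype.sum_eq_single a (fun x hx => by simp [hR, hai, haj, hx, Ne.symm hx])]
        rcases eq_or_ne b i with hbi | hbi
        · simp [hR, hai, haj, hbi, one_apply, Ne.symm hai]
        · rcases eq_or_ne b j with hbj | hbj
          · simp [hR, hai, haj, hbj, hbi, one_apply, Ne.symm haj]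
          · simp [hR, hai, haj, hbi, hbj, one_apply]
  · rw [mul_apply]
    simp only [transpose_apply]
    rw [Fintype.sum_eq_add i j hij (fun x ⟨hx1, hx2⟩ => by simp [hR, hx1, hx2])]
    rw [mul_apply, mul_apply]
    rw [Fintype.sum_eq_add i j hij (fun x ⟨hx1, hx2⟩ => by simp [hR, hx1, hx2])]
    rw [Fintype.sum_eq_add i j hij (fun x ⟨hx1, hx2⟩ => by simp [hR, hx1, hx2])]
    simp only [hR, if_pos rfl, if_neg hij, if_neg (Ne.symm hij), if_true, ite_true]
    rw [hC.apply i j]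
    rw [← hθ]
    simp only [hf]
    ring

private lemma extend_matrix (i : m) (A : Matrix m m ℝ)
    (V : Matrix {x // x ≠ i} {x // x ≠ i} ℝ) (hV : V * Vᵀ = 1) :
    ∃ W : Matrix m m ℝ, W * Wᵀ = 1 ∧ (W * A * Wᵀ) i i = A i i ∧
      ∀ a, (ha : a ≠ i) → (W * A * Wᵀ) a a =
        (V * (A.submatrix (fun x : {x // x ≠ i} => (x : m)) (fun x : {x // x ≠ i} => (x : m))) * Vᵀ)
          ⟨a, ha⟩ ⟨a, ha⟩ := by
  classical
  set W : Matrix m m ℝ := fun a b =>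
    if ha : a = i then (if b = i then 1 else 0)
    else if hb : b = i then 0 else V ⟨a, ha⟩ ⟨b, hb⟩ with hW
  have hWvi : ∀ b, W i b = if b = i then 1 else 0 := fun b => by simp [hW]
  have hWv : ∀ a (ha : a ≠ i) b (hb : b ≠ i), W a b = V ⟨a, ha⟩ ⟨b, hb⟩ :=
    fun a ha b hb => by simp [hW, ha, hb]
  have hWv0 : ∀ a, a ≠ i → W a i = 0 := fun a ha => by simp [hW, ha]
  refine ⟨W, ?_, ?_, ?_⟩
  · ext a b
    rw [mul_apply]
    simp only [transpose_apply]
    rcases eq_or_ne a i with hai | hai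
    · rw [Fintype.sum_eq_single i (fun x hx => by simp [hai, hWvi, hx])]
      rcases eq_or_ne b i with hbi | hbi
      · simp [hai, hbi, hWvi, one_apply]
      · simp [hai, hWvi, hWv0 b hbi, one_apply, Ne.symm hbi]
    · rcases eq_or_ne b i with hbi | hbi
      · rw [Fintype.sum_eq_single i (fun x hx => by simp [hbi, hWvi, hx])]
        simp [hbi, hWvi, hWv0 a hai, one_apply, hai]
      · rw [sum_split i (fun k => W a k * W b k)]
        rw [hWv0 a hai, hWv0 b hbi]
        have : ∑ k : {x // x ≠ i}, W a k * W b k = (V * Vᵀ) ⟨a, hai⟩ ⟨b, hbi⟩ := by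
          rw [mul_apply]
          exact Finset.sum_congr rfl (fun k _ => by
            rw [hWv a hai k k.2, transpose_apply, hWv b hbi k k.2])
        rw [this, hV]
        simp [one_apply, Subtype.ext_iff]
  · rw [mul_apply]
    simp only [transpose_apply]
    rw [Fintype.sum_eq_single i (fun x hx => by simp [hWvi, hx])]
    rw [hWvi, if_pos rfl, mul_apply]
    rw [Fintype.sum_eq_single i (fun x hx => by simp [hWvi, hx])]
    simp [hWvi]
  · intro a ha
    rw [mul_apply]
    simp only [transpose_apply]
    rw [sum_split i (fun l => (W * A) a l * W a l)]
    rw [hWv0 a ha, mul_zero, zero_add]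
    rw [mul_apply (M := V * _) (N := Vᵀ)]
    refine Finset.sum_congr rfl (fun l _ => ?_)
    rw [transpose_apply, hWv a ha l l.2]
    congr 1
    rw [mul_apply, mul_apply, sum_split i (fun k => W a k * A k l)]
    rw [hWv0 a ha, zero_mul, zero_add]
    exact Finset.sum_congr rfl (fun k _ => by rw [hWv a ha k k.2]; rfl)

private lemma aux_equal_diag : ∀ (N : ℕ) (m : Type) [Fintype m] [DecidableEq m], Fintype.card m = N →
    ∀ C : Matrix m m ℝ, C.IsSymm →
    ∃ W : Matrix m m ℝ, W * Wᵀ = 1 ∧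
      ∀ i, (W * C * Wᵀ) i i = C.trace / (Fintype.card m : ℝ) := by
  intro N
  induction N using Nat.strong_induction_on with
  | _ N IH =>
  intro m _ _ hcard C hC
  set t := C.trace / (Fintype.card m : ℝ) with ht
  by_cases hall : ∀ k, C k k = t
  · exact ⟨1, by simp, fun i => by simp [hall i]⟩
  · push_neg at hall
    obtain ⟨k0, hk0⟩ := hall
    have hpos : 0 < Fintype.card m := Fintype.card_pos_iff.mpr ⟨k0⟩
    have hposR : (0 : ℝ) < (Fintype.card m : ℝ) := by exact_mod_cast hpos
    obtain ⟨i, -, hi⟩ := Finset.exists_min_image Finset.univ (fun k => C k k) ⟨k0, Finset.mem_univ _⟩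
    obtain ⟨j, -, hj⟩ := Finset.exists_max_image Finset.univ (fun k => C k k) ⟨k0, Finset.mem_univ _⟩
    have hit : C i i ≤ t := by
      rw [ht, le_div_iff₀ hposR]
      calc C i i * (Fintype.card m : ℝ) = ∑ _k : m, C i i := by
            rw [Finset.sum_const, Finset.card_univ, nsmul_eq_mul, mul_comm]
        _ ≤ ∑ k, C k k := Finset.sum_le_sum (fun k _ => hi k (Finset.mem_univ k))
        _ = C.trace := rfl
    have htj : t ≤ C j j := by
      rw [ht, div_le_iff₀ hposR]
      calc C.trace = ∑ k, C k k := rfl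
        _ ≤ ∑ _k : m, C j j := Finset.sum_le_sum (fun k _ => hj k (Finset.mem_univ k))
        _ = C j j * (Fintype.card m : ℝ) := by
            rw [Finset.sum_const, Finset.card_univ, nsmul_eq_mul, mul_comm]
    have hij : i ≠ j := by
      intro hij'
      apply hk0
      have hkk : ∀ k, C k k = C i i := fun k =>
        le_antisymm (hij' ▸ hj k (Finset.mem_univ k)) (hi k (Finset.mem_univ k))
      have htrace : C.trace = (Fintype.card m : ℝ) * C i i := by
        show ∑ k, C k k = _
        simp [hkk, Finset.sum_const, Finset.card_univ, nsmul_eq_mul]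
      rw [hkk k0, ht, htrace, mul_div_cancel_left₀ _ (ne_of_gt hposR)]
    obtain ⟨R, hR, hRii⟩ := exists_rotation hij C hC hit htj
    set C' := R * C * Rᵀ with hC'def
    have hC'symm : C'.IsSymm := by
      rw [Matrix.IsSymm] at hC ⊢
      rw [hC'def]
      rw [transpose_mul, transpose_mul, transpose_transpose, hC, mul_assoc]
    have htrC' : C'.trace = C.trace := by
      rw [hC'def, Matrix.trace_mul_comm, ← Matrix.mul_assoc, mul_eq_one_comm.mp hR,
        Matrix.one_mul]
    set B := C'.submatrix (fun x : {x // x ≠ i} => (x : m)) (fun x : {x // x ≠ i} => (x : m))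
      with hBdef
    have hBsymm : B.IsSymm := by
      rw [Matrix.IsSymm]
      ext a b
      simp only [hBdef, transpose_apply, submatrix_apply]
      exact hC'symm.apply _ _
    have hcards : Fintype.card {x // x ≠ i} = Fintype.card m - 1 := by
      have := Fintype.card_subtype_compl (fun x : m => x = i)
      simpa [Fintype.card_subtype_eq] using this
    obtain ⟨V, hV, hVd⟩ := IH (Fintype.card m - 1) (by omega) {x // x ≠ i}
      hcards B hBsymm
    obtain ⟨W, hW, hWi, hWa⟩ := extend_matrix i C' V hV
    have hconj : (W * R) * C * (W * R)ᵀ = W * C' * Wᵀ := by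
      rw [transpose_mul, hC'def]
      simp only [Matrix.mul_assoc]
    refine ⟨W * R, ?_, ?_⟩
    · rw [transpose_mul, ← Matrix.mul_assoc, Matrix.mul_assoc W R, hR, Matrix.mul_one, hW]
    · intro a
      rw [hconj]
      rcases eq_or_ne a i with hai | hai
      · rw [hai, hWi, hRii]
      · rw [hWa a hai, hVd ⟨a, hai⟩]
        have hcard2 : 2 ≤ Fintype.card m := Fintype.one_lt_card_iff_nontrivial.mpr ⟨⟨i, j, hij⟩⟩
        have hBtr : B.trace = C.trace - t := by
          have h2 : C'.trace = C' i i + B.trace := by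
            show ∑ k, C' k k = _
            rw [sum_split i (fun k => C' k k)]
            rfl
          have : C' i i = t := hRii
          rw [← htrC', h2, this]
          ring
        have hcast : ((Fintype.card {x // x ≠ i} : ℕ) : ℝ) = (Fintype.card m : ℝ) - 1 := by
          rw [hcards]
          have : (1 : ℕ) ≤ Fintype.card m := hpos
          push_cast [Nat.cast_sub this]
          ring
        rw [hBtr, hcast, ht]
        have hne : (Fintype.card m : ℝ) - 1 ≠ 0 := by
          have : (2 : ℝ) ≤ (Fintype.card m : ℝ) := by exact_mod_cast hcard2
          linarith
        field_simp


/-- For any real symmetric `n × n` matrix `C` with `n ≥ 1`, there exists an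
orthogonal matrix `W` such that every diagonal entry of `W C Wᵀ` equals `trace C / n`:
the PCA basis can be rotated so that the variance along each component is identical. -/
theorem exists_orthogonal_equal_diagonal (n : ℕ) (hn : 1 ≤ n)
    (C : Matrix (Fin n) (Fin n) ℝ) (hC : C.IsSymm) :
    ∃ W : Matrix (Fin n) (Fin n) ℝ, W ∈ Matrix.orthogonalGroup (Fin n) ℝ ∧
      ∀ i : Fin n, (W * C * Wᵀ) i i = C.trace / n := by
  obtain ⟨W, hW, hWd⟩ := aux_equal_diag n (Fin n) (Fintype.card_fin n) C hC
  refine ⟨W, ?_, fun i => ?_⟩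
  · rw [Matrix.mem_orthogonalGroup_iff]
    exact hW
  · simpa [Fintype.card_fin] using hWd i
end

section
/- Let C be a real symmetric n×n matrix, let i ≠ j be indices, and let k be a real number lying between C_{ii} and C_{jj} (i.e., min(C_{ii}, C_{jj}) ≤ k ≤ max(C_{ii}, C_{jj})). Then there exists an angle θ such that the Givens rotation G_θ in the (i,j)-coordinate plane satisfies (G_θ C G_θᵀ)_{ii} = k. That is, if the variance along component i is below some target value k and the variance along component j is above it, a rotation in the plane spanned by these two basis vectors makes the variance along component i exactly k. -/
open Matrix

/-- The Givens rotation by angle `θ` in the `(i,j)`-coordinate plane: the matrix equal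
to the identity except for the entries `cos θ, sin θ, −sin θ, cos θ` in rows/columns
`i` and `j`. -/
noncomputable def givensRotation {n : ℕ} (i j : Fin n) (θ : ℝ) : Matrix (Fin n) (Fin n) ℝ :=
  fun a b =>
    if a = i ∧ b = i then Real.cos θ
    else if a = i ∧ b = j then Real.sin θ
    else if a = j ∧ b = i then -Real.sin θ
    else if a = j ∧ b = j then Real.cos θ
    else if a = b then 1 else 0

lemma givens_row {n : ℕ} (i j : Fin n) (hij : i ≠ j) (θ : ℝ) (b : Fin n) :
    givensRotation i j θ i b =
      if b = i then Real.cos θ else if b = j then Real.sin θ else 0 := by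
  by_cases hbi : b = i <;> by_cases hbj : b = j <;>
    simp_all [givensRotation, hij, eq_comm]

lemma givens_diag_key {n : ℕ} (C : Matrix (Fin n) (Fin n) ℝ) (i j : Fin n) (hij : i ≠ j)
    (θ : ℝ) :
    (givensRotation i j θ * C * (givensRotation i j θ)ᵀ) i i =
      Real.cos θ ^ 2 * C i i + Real.cos θ * Real.sin θ * (C i j + C j i)
        + Real.sin θ ^ 2 * C j j := by
  simp only [mul_apply, transpose_apply, givens_row i j hij]
  rw [Finset.sum_eq_add_of_mem i j (Finset.mem_univ _) (Finset.mem_univ _) hij ?_]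
  · simp only [if_pos rfl, if_neg hij, if_neg hij.symm]
    rw [Finset.sum_eq_add_of_mem i j (Finset.mem_univ _) (Finset.mem_univ _) hij ?_,
        Finset.sum_eq_add_of_mem i j (Finset.mem_univ _) (Finset.mem_univ _) hij ?_]
    · simp [hij, hij.symm]; ring
    · intro c _ hc
      obtain ⟨h1, h2⟩ := not_or.mp (by simpa using hc)
      simp [h1, h2]
    · intro c _ hc
      obtain ⟨h1, h2⟩ := not_or.mp (by simpa using hc)
      simp [h1, h2]
  · intro c _ hc
    obtain ⟨h1, h2⟩ := not_or.mp (by simpa using hc)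
    simp [h1, h2]

/-- if `k` lies between the diagonal entries `C i i` and `C j j` of a real
symmetric matrix `C`, then some Givens rotation in the `(i,j)`-plane makes the `i`-th
diagonal entry of the rotated matrix exactly `k`. -/
theorem givens_intermediate_diagonal {n : ℕ} (C : Matrix (Fin n) (Fin n) ℝ)
    (hC : C.IsSymm) (i j : Fin n) (hij : i ≠ j) (k : ℝ)
    (hk₁ : min (C i i) (C j j) ≤ k) (hk₂ : k ≤ max (C i i) (C j j)) :
    ∃ θ : ℝ, (givensRotation i j θ * C * (givensRotation i j θ)ᵀ) i i = k := by
  set f : ℝ → ℝ := fun θ =>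
    Real.cos θ ^ 2 * C i i + Real.cos θ * Real.sin θ * (C i j + C j i)
      + Real.sin θ ^ 2 * C j j with hf
  have hcont : ContinuousOn f (Set.uIcc 0 (Real.pi / 2)) := by fun_prop
  have h0 : f 0 = C i i := by simp [hf]
  have h1 : f (Real.pi / 2) = C j j := by simp [hf]
  have hmem : k ∈ Set.uIcc (f 0) (f (Real.pi / 2)) := by
    rw [h0, h1, Set.uIcc_eq_union]
    rcases le_total (C i i) (C j j) with h | h
    · left; constructor
      · simpa [min_eq_left h] using hk₁
      · simpa [max_eq_right h] using hk₂
    · right; constructor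
      · simpa [min_eq_right h] using hk₁
      · simpa [max_eq_left h] using hk₂
  obtain ⟨θ, _, hθ⟩ := intermediate_value_uIcc hcont hmem
  exact ⟨θ, by rw [givens_diag_key C i j hij θ]; exact hθ⟩
end

section
/- Let C = X Xᵀ be the correlation matrix of zero-mean data X (a real symmetric positive semidefinite m×m matrix), let v₁, …, v_m be an orthonormal basis of ℝᵐ of eigenvectors of C with eigenvalues λ₁ ≥ λ₂ ≥ … ≥ λ_m ≥ 0, and let 1 ≤ k < m with λ_i > 0 for all i ≤ k. Define f_k(w) = ½ wᵀCw − Σ_{i=1}^{k} (wᵀ C v_i)² / (2 λ_i). Then f_k attains its maximum over the unit sphere {w : wᵀw = 1} at w = v_{k+1}: for all w with wᵀw = 1, f_k(w) ≤ f_k(v_{k+1}) = λ_{k+1}/2. That is, the Simple Hebbian PCA objective for node k+1, given the first k principal components, is maximized by the (k+1)-st principal component. -/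
open Matrix Finset

/-- let `C = X Xᵀ` be the correlation matrix of zero-mean data, with
orthonormal eigenbasis `v₁, …, v_m`, decreasing nonnegative eigenvalues
`λ₁ ≥ … ≥ λ_m ≥ 0`, and `1 ≤ k < m` with `λ_i > 0` for `i ≤ k`. The Simple Hebbian PCA
objective `f_k(w) = ½ wᵀ C w − Σ_{i=1}^{k} (wᵀ C v_i)² / (2 λ_i)` attains its maximum
over the unit sphere at `w = v_{k+1}`, with maximum value `λ_{k+1} / 2`.
(With zero-based indexing, `v_{k+1}` and `λ_{k+1}` are `v ⟨k, _⟩` and `lam ⟨k, _⟩`.) -/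
theorem simple_hebbian_pca_objective_max {m N : ℕ} (X : Matrix (Fin m) (Fin N) ℝ)
    (C : Matrix (Fin m) (Fin m) ℝ) (hCX : C = X * Xᵀ)
    (v : Fin m → Fin m → ℝ) (lam : Fin m → ℝ)
    (horth : ∀ i j : Fin m, v i ⬝ᵥ v j = if i = j then (1 : ℝ) else 0)
    (heig : ∀ i : Fin m, C.mulVec (v i) = lam i • v i)
    (hdec : ∀ i j : Fin m, i ≤ j → lam j ≤ lam i)
    (hnonneg : ∀ i : Fin m, 0 ≤ lam i)
    (k : ℕ) (hk : 1 ≤ k) (hkm : k < m)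
    (hpos : ∀ i : Fin m, (i : ℕ) < k → 0 < lam i)
    (f : (Fin m → ℝ) → ℝ)
    (hf : ∀ w : Fin m → ℝ,
      f w = (1 / 2) * (w ⬝ᵥ C.mulVec w)
        - ∑ i ∈ univ.filter (fun i : Fin m => (i : ℕ) < k),
            (w ⬝ᵥ C.mulVec (v i)) ^ 2 / (2 * lam i)) :
    (∀ w : Fin m → ℝ, w ⬝ᵥ w = 1 → f w ≤ f (v ⟨k, hkm⟩)) ∧
    f (v ⟨k, hkm⟩) = lam ⟨k, hkm⟩ / 2 := by
  set K : Fin m := ⟨k, hkm⟩ with hK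
  -- value at v_K
  have hvK : f (v K) = lam K / 2 := by
    rw [hf]
    have h1 : v K ⬝ᵥ C.mulVec (v K) = lam K := by
      rw [heig, dotProduct_smul, horth]
      simp
    have h2 : ∀ i ∈ univ.filter (fun i : Fin m => (i : ℕ) < k),
        (v K ⬝ᵥ C.mulVec (v i)) ^ 2 / (2 * lam i) = 0 := by
      intro i hi
      simp only [mem_filter] at hi
      have hne : K ≠ i := by
        intro h; rw [← h] at hi; exact lt_irrefl _ hi.2
      rw [heig, dotProduct_smul, horth]
      simp [hne]
    rw [Finset.sum_congr rfl h2]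
    simp [h1]
    ring
  refine ⟨?_, hvK⟩
  intro w hw
  rw [hvK]
  -- completeness of the orthonormal basis
  have hVVt : (Matrix.of v) * (Matrix.of v)ᵀ = 1 := by
    ext i j
    simpa [Matrix.mul_apply, Matrix.one_apply, dotProduct] using horth i j
  have hVtV : (Matrix.of v)ᵀ * (Matrix.of v) = 1 := mul_eq_one_comm.mp hVVt
  set c : Fin m → ℝ := fun i => v i ⬝ᵥ w with hc
  have hexp : ∀ j, w j = ∑ i, c i * v i j := by
    intro j
    have h0 := congrArg (fun M => M.mulVec w j) hVtV
    simp only [Matrix.mulVec, Matrix.mul_apply, dotProduct, Matrix.one_apply,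
      Matrix.transpose_apply, Matrix.of_apply] at h0
    have h1 : w j = ∑ x, (∑ i, v i j * v i x) * w x := by
      rw [h0]; simp
    rw [h1]
    simp only [Finset.sum_mul]
    rw [Finset.sum_comm]
    refine Finset.sum_congr rfl fun i _ => ?_
    simp only [hc, dotProduct, Finset.sum_mul]
    exact Finset.sum_congr rfl fun x _ => by ring
  have hwv : ∀ i, w ⬝ᵥ v i = c i := fun i => dotProduct_comm w (v i)
  -- w ⬝ w = ∑ c i ^ 2
  have haux : ∀ i, ∑ j, w j * (c i * v i j) = c i * c i := by
    intro i
    have : ∑ j, w j * (c i * v i j) = c i * (w ⬝ᵥ v i) := by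
      simp only [dotProduct, Finset.mul_sum]
      exact Finset.sum_congr rfl fun j _ => by ring
    rw [this, hwv]
  have hww : ∑ i, c i ^ 2 = 1 := by
    rw [← hw, dotProduct]
    have h1 : ∑ j, w j * w j = ∑ j, ∑ i, w j * (c i * v i j) := by
      refine Finset.sum_congr rfl fun j _ => ?_
      rw [← Finset.mul_sum, ← hexp j]
    rw [h1, Finset.sum_comm]
    refine Finset.sum_congr rfl fun i _ => ?_
    rw [haux i]; ring
  -- w ⬝ C w = ∑ lam i * c i ^ 2
  have hCw : ∀ j, C.mulVec w j = ∑ i, c i * (lam i * v i j) := by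
    intro j
    have h0 : C.mulVec w j = ∑ l, C j l * w l := rfl
    have h1 : ∑ l, C j l * w l = ∑ l, ∑ i, C j l * (c i * v i l) := by
      refine Finset.sum_congr rfl fun l _ => ?_
      rw [← Finset.mul_sum, ← hexp l]
    rw [h0, h1, Finset.sum_comm]
    refine Finset.sum_congr rfl fun i _ => ?_
    have h2 : ∑ l, C j l * (c i * v i l) = c i * (C.mulVec (v i) j) := by
      simp only [Matrix.mulVec, dotProduct, Finset.mul_sum]
      exact Finset.sum_congr rfl fun l _ => by ring
    rw [h2, heig]
    simp [Pi.smul_apply]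
  have hwCw : w ⬝ᵥ C.mulVec w = ∑ i, lam i * c i ^ 2 := by
    rw [dotProduct]
    have h1 : ∑ j, w j * C.mulVec w j = ∑ j, ∑ i, w j * (c i * (lam i * v i j)) := by
      refine Finset.sum_congr rfl fun j _ => ?_
      rw [← Finset.mul_sum, ← hCw j]
    rw [h1, Finset.sum_comm]
    refine Finset.sum_congr rfl fun i _ => ?_
    have h2 : ∑ j, w j * (c i * (lam i * v i j)) = c i * lam i * (w ⬝ᵥ v i) := by
      simp only [dotProduct, Finset.mul_sum]
      exact Finset.sum_congr rfl fun j _ => by ring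
    rw [h2, hwv]; ring
  have hwCv : ∀ i, w ⬝ᵥ C.mulVec (v i) = lam i * c i := by
    intro i
    rw [heig, dotProduct_smul, hwv]
    rfl
  rw [hf, hwCw]
  have hterm : ∀ i ∈ univ.filter (fun i : Fin m => (i : ℕ) < k),
      (w ⬝ᵥ C.mulVec (v i)) ^ 2 / (2 * lam i) = (1/2) * (lam i * c i ^ 2) := by
    intro i hi
    simp only [mem_filter] at hi
    have hli : lam i ≠ 0 := ne_of_gt (hpos i hi.2)
    rw [hwCv]
    field_simp
  rw [Finset.sum_congr rfl hterm, ← Finset.mul_sum]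
  rw [← Finset.sum_filter_add_sum_filter_not univ (fun i : Fin m => (i : ℕ) < k)
    (fun i => lam i * c i ^ 2)]
  ring_nf
  -- goal should now reduce to the bound on the tail sum
  have hbound : ∑ i ∈ univ.filter (fun i : Fin m => ¬ (i : ℕ) < k), lam i * c i ^ 2
      ≤ lam K := by
    calc ∑ i ∈ univ.filter (fun i : Fin m => ¬ (i : ℕ) < k), lam i * c i ^ 2
        ≤ ∑ i ∈ univ.filter (fun i : Fin m => ¬ (i : ℕ) < k), lam K * c i ^ 2 := by
          refine Finset.sum_le_sum fun i hi => ?_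
          simp only [mem_filter, not_lt] at hi
          have : K ≤ i := by exact hi.2
          exact mul_le_mul_of_nonneg_right (hdec K i this) (sq_nonneg _)
      _ = lam K * ∑ i ∈ univ.filter (fun i : Fin m => ¬ (i : ℕ) < k), c i ^ 2 := by
          rw [Finset.mul_sum]
      _ ≤ lam K * ∑ i, c i ^ 2 := by
          refine mul_le_mul_of_nonneg_left ?_ (hnonneg K)
          exact Finset.sum_le_sum_of_subset_of_nonneg (Finset.filter_subset _ _)
            (fun i _ _ => sq_nonneg _)
      _ = lam K := by rw [hww, mul_one]
  linarith
end

section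
/- Let C = X Xᵀ be the correlation matrix of zero-mean data X (a real symmetric positive semidefinite m×m matrix), let v₁, …, v_m be an orthonormal basis of ℝᵐ of eigenvectors of C with eigenvalues λ₁ ≥ λ₂ ≥ … ≥ λ_m ≥ 0, let 1 ≤ k < m with λ_i > 0 for all i ≤ k, and suppose additionally λ_{k+1} > λ_j for all j > k+1 and λ_{k+1} > 0. Define f_k(w) = ½ wᵀCw − Σ_{i=1}^{k} (wᵀ C v_i)² / (2 λ_i). Then the maximizers of f_k over the unit sphere {w : wᵀw = 1} are exactly w = v_{k+1} and w = −v_{k+1}. -/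
open Matrix Finset

/-!
In the orthonormal eigenbasis, `f_k(w) = ½ ∑ᵢ dᵢ ⟨w, vᵢ⟩²`, where `dᵢ` are the eigenvalues of the
deflated matrix `C_k`: `0` for `i < k` and `λᵢ` otherwise. On the unit sphere the squared
coordinates sum to `1`, so `d_k - 2 f_k(w) = ∑ᵢ (d_k - dᵢ) ⟨w, vᵢ⟩²`. By the gap hypotheses every
coefficient `d_k - dᵢ` with `i ≠ k` is positive, so the maximum `d_k / 2` is attained exactly when
all coordinates but the `k`-th vanish, i.e. at `w = ±v_k` (indices start at `0`).
-/

def deflatedEigenvalues {n : Type*} [DecidableEq n] (lam : n → ℝ) (s : Finset n) (i : n) : ℝ :=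
  if i ∈ s then 0 else lam i

theorem sum_mul_sq_le_of_le {ι : Type*} [Fintype ι] {d a : ι → ℝ} {D : ℝ}
    (hd : ∀ i, d i ≤ D) (ha : ∑ i, a i ^ 2 = 1) : ∑ i, d i * a i ^ 2 ≤ D :=
  calc ∑ i, d i * a i ^ 2 ≤ ∑ i, D * a i ^ 2 :=
        sum_le_sum fun i _ => mul_le_mul_of_nonneg_right (hd i) (sq_nonneg _)
    _ = D := by rw [← mul_sum, ha, mul_one]

theorem sum_mul_sq_eq_iff_of_lt {ι : Type*} [Fintype ι] {d a : ι → ℝ} {i₀ : ι}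
    (hd : ∀ i ≠ i₀, d i < d i₀) (ha : ∑ i, a i ^ 2 = 1) :
    ∑ i, d i * a i ^ 2 = d i₀ ↔ ∀ i ≠ i₀, a i = 0 := by
  have hdefect : d i₀ - ∑ i, d i * a i ^ 2 = ∑ i, (d i₀ - d i) * a i ^ 2 := by
    simp only [sub_mul, sum_sub_distrib, ← mul_sum, ha, mul_one]
  have hterm : ∀ i, (d i₀ - d i) * a i ^ 2 = 0 ↔ i ≠ i₀ → a i = 0 := fun i => by
    by_cases hi : i = i₀
    · simp [hi]
    · simp [hi, (sub_pos.2 (hd i hi)).ne']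
  rw [eq_comm, ← sub_eq_zero, hdefect,
    sum_eq_zero_iff_of_nonneg fun i _ => mul_nonneg ?_ (sq_nonneg _)]
  · simp only [mem_univ, true_implies, hterm]
  · by_cases hi : i = i₀
    · simp [hi]
    · exact (sub_pos.2 (hd i hi)).le

section Orthonormal

variable {n : Type*} [Fintype n] [DecidableEq n] {v : n → n → ℝ}
  (horth : ∀ i j, v i ⬝ᵥ v j = if i = j then (1 : ℝ) else 0)
include horth

theorem sum_dotProduct_smul_eq_self (u : n → ℝ) :
    ∑ j, (u ⬝ᵥ v j) • v j = u := by
  have hVVt : of v * (of v)ᵀ = 1 := by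
    ext i j
    simpa [mul_apply, one_apply, dotProduct] using horth i j
  calc ∑ j, (u ⬝ᵥ v j) • v j = ((of v)ᵀ * of v) *ᵥ u := by
        simp only [← mulVec_mulVec, mulVec_transpose, vecMul_eq_sum, mulVec, dotProduct_comm]
        rfl
    _ = u := by rw [mul_eq_one_comm.mp hVVt, one_mulVec]

theorem dotProduct_self_eq_sum_sq (u : n → ℝ) :
    u ⬝ᵥ u = ∑ j, (u ⬝ᵥ v j) ^ 2 := by
  nth_rw 2 [← sum_dotProduct_smul_eq_self horth u]
  simp only [dotProduct_sum, dotProduct_smul, smul_eq_mul, sq]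

theorem dotProduct_mulVec_self_eq_sum
    {C : Matrix n n ℝ} {lam : n → ℝ}
    (heig : ∀ i, C *ᵥ v i = lam i • v i) (u : n → ℝ) :
    u ⬝ᵥ C *ᵥ u = ∑ j, lam j * (u ⬝ᵥ v j) ^ 2 := by
  nth_rw 2 [← sum_dotProduct_smul_eq_self horth u]
  simp only [mulVec_sum, mulVec_smul, heig, dotProduct_sum, dotProduct_smul, smul_eq_mul]
  exact sum_congr rfl fun j _ => by ring

theorem eq_or_eq_neg_iff_dotProduct_eq_zero {u : n → ℝ} (hu : u ⬝ᵥ u = 1) (i₀ : n) :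
    (∀ i ≠ i₀, u ⬝ᵥ v i = 0) ↔ u = v i₀ ∨ u = -v i₀ := by
  constructor
  · intro hu0
    have hu_eq : u = (u ⬝ᵥ v i₀) • v i₀ := by
      conv_lhs => rw [← sum_dotProduct_smul_eq_self horth u]
      exact sum_eq_single i₀ (fun j _ hj => by rw [hu0 j hj, zero_smul]) (by simp)
    have hsq : (u ⬝ᵥ v i₀) ^ 2 = 1 := by
      rw [← hu, dotProduct_self_eq_sum_sq horth u,
        sum_eq_single i₀ (fun j _ hj => by rw [hu0 j hj, sq, zero_mul]) (by simp)]
    rcases sq_eq_one_iff.mp hsq with h | h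
    · left; rwa [h, one_smul] at hu_eq
    · right; rwa [h, neg_one_smul] at hu_eq
  · rintro (rfl | rfl) i hi <;> simp [horth, hi.symm]

theorem sum_mul_dotProduct_sq_le
    {d : n → ℝ} {D : ℝ} (hd : ∀ i, d i ≤ D) {u : n → ℝ}
    (hu : u ⬝ᵥ u = 1) : ∑ i, d i * (u ⬝ᵥ v i) ^ 2 ≤ D :=
  sum_mul_sq_le_of_le hd (by rw [← dotProduct_self_eq_sum_sq horth, hu])

theorem sum_mul_dotProduct_sq_eq_iff
    {d : n → ℝ} {i₀ : n} (hd : ∀ i ≠ i₀, d i < d i₀)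
    {u : n → ℝ} (hu : u ⬝ᵥ u = 1) :
    ∑ i, d i * (u ⬝ᵥ v i) ^ 2 = d i₀ ↔ u = v i₀ ∨ u = -v i₀ :=
  (sum_mul_sq_eq_iff_of_lt hd (by rw [← dotProduct_self_eq_sum_sq horth, hu])).trans
    (eq_or_eq_neg_iff_dotProduct_eq_zero horth hu i₀)

theorem half_dotProduct_mulVec_sub_sum_eq
    {C : Matrix n n ℝ} {lam : n → ℝ}
    (heig : ∀ i, C *ᵥ v i = lam i • v i) (s : Finset n) (u : n → ℝ) :
    (1 / 2) * (u ⬝ᵥ C *ᵥ u) - ∑ i ∈ s, (u ⬝ᵥ C *ᵥ v i) ^ 2 / (2 * lam i)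
      = (1 / 2) * ∑ i, deflatedEigenvalues lam s i * (u ⬝ᵥ v i) ^ 2 := by
  -- For `lam i = 0` this also holds, because `x / 0 = 0`.
  have hterm : ∀ i, (u ⬝ᵥ C *ᵥ v i) ^ 2 / (2 * lam i) = (1 / 2) * (lam i * (u ⬝ᵥ v i) ^ 2) := by
    intro i
    rw [heig, dotProduct_smul, smul_eq_mul]
    rcases eq_or_ne (lam i) 0 with h | h
    · simp [h]
    · field_simp
  rw [dotProduct_mulVec_self_eq_sum horth heig, ← sum_ite_mem_eq s, mul_sum, mul_sum,
    ← sum_sub_distrib]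
  refine sum_congr rfl fun i _ => ?_
  unfold deflatedEigenvalues
  split_ifs <;> simp [hterm]

end Orthonormal

theorem simple_hebbian_pca_objective_unique_max_general {m : ℕ}
    (C : Matrix (Fin m) (Fin m) ℝ)
    (v : Fin m → Fin m → ℝ) (lam : Fin m → ℝ)
    (horth : ∀ i j : Fin m, v i ⬝ᵥ v j = if i = j then (1 : ℝ) else 0)
    (heig : ∀ i : Fin m, C.mulVec (v i) = lam i • v i)
    (k : ℕ) (hkm : k < m)
    (hgap : ∀ j : Fin m, k + 1 ≤ (j : ℕ) → lam j < lam ⟨k, hkm⟩)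
    (hposk : 0 < lam ⟨k, hkm⟩)
    (f : (Fin m → ℝ) → ℝ)
    (hf : ∀ w : Fin m → ℝ,
      f w = (1 / 2) * (w ⬝ᵥ C.mulVec w)
        - ∑ i ∈ univ.filter (fun i : Fin m => (i : ℕ) < k),
            (w ⬝ᵥ C.mulVec (v i)) ^ 2 / (2 * lam i)) :
    ∀ w : Fin m → ℝ, w ⬝ᵥ w = 1 →
      ((∀ u : Fin m → ℝ, u ⬝ᵥ u = 1 → f u ≤ f w) ↔
        (w = v ⟨k, hkm⟩ ∨ w = -v ⟨k, hkm⟩)) := by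
  intro w hw
  set i₀ : Fin m := ⟨k, hkm⟩
  set d := deflatedEigenvalues lam (univ.filter fun i : Fin m => (i : ℕ) < k)
  have hfd : ∀ u, f u = (1 / 2) * ∑ i, d i * (u ⬝ᵥ v i) ^ 2 := fun u =>
    (hf u).trans (half_dotProduct_mulVec_sub_sum_eq horth heig _ u)
  have hd : ∀ i ≠ i₀, d i < d i₀ := by
    intro i hi
    have hik : (i : ℕ) ≠ k := fun h => hi (Fin.ext h)
    simp only [d, deflatedEigenvalues, mem_filter, mem_univ, true_and, i₀, lt_irrefl, if_false]
    split_ifs with hlt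
    · exact hposk
    · exact hgap i (by omega)
  have hle : ∀ u : Fin m → ℝ, u ⬝ᵥ u = 1 → ∑ i, d i * (u ⬝ᵥ v i) ^ 2 ≤ d i₀ := fun u hu =>
    sum_mul_dotProduct_sq_le horth
      (fun i => (eq_or_ne i i₀).elim (fun h => h ▸ le_rfl) fun hi => (hd i hi).le) hu
  have hmax : ∑ i, d i * (v i₀ ⬝ᵥ v i) ^ 2 = d i₀ :=
    (sum_mul_dotProduct_sq_eq_iff horth hd (by simp [horth])).2 (Or.inl rfl)
  rw [← sum_mul_dotProduct_sq_eq_iff horth hd hw]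
  constructor
  · intro hw_max
    have := hw_max (v i₀) (by simp [horth])
    rw [hfd, hfd, hmax] at this
    linarith [hle w hw]
  · intro hw_eq u hu
    rw [hfd, hfd, hw_eq]
    linarith [hle u hu]

/-- in the setting of the Simple Hebbian PCA objective
`f_k(w) = ½ wᵀ C w − Σ_{i=1}^{k} (wᵀ C v_i)² / (2 λ_i)` with `C = X Xᵀ`, if moreover
`λ_{k+1} > 0` and `λ_{k+1} > λ_j` for all `j > k+1`, then the maximizers of `f_k` over
the unit sphere are exactly `v_{k+1}` and `−v_{k+1}`.
(With zero-based indexing, `v_{k+1}` and `λ_{k+1}` are `v ⟨k, _⟩` and `lam ⟨k, _⟩`.) -/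
theorem simple_hebbian_pca_objective_unique_max {m N : ℕ} (X : Matrix (Fin m) (Fin N) ℝ)
    (C : Matrix (Fin m) (Fin m) ℝ) (hCX : C = X * Xᵀ)
    (v : Fin m → Fin m → ℝ) (lam : Fin m → ℝ)
    (horth : ∀ i j : Fin m, v i ⬝ᵥ v j = if i = j then (1 : ℝ) else 0)
    (heig : ∀ i : Fin m, C.mulVec (v i) = lam i • v i)
    (hdec : ∀ i j : Fin m, i ≤ j → lam j ≤ lam i)
    (hnonneg : ∀ i : Fin m, 0 ≤ lam i)
    (k : ℕ) (hk : 1 ≤ k) (hkm : k < m)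
    (hpos : ∀ i : Fin m, (i : ℕ) < k → 0 < lam i)
    (hgap : ∀ j : Fin m, k + 1 ≤ (j : ℕ) → lam j < lam ⟨k, hkm⟩)
    (hposk : 0 < lam ⟨k, hkm⟩)
    (f : (Fin m → ℝ) → ℝ)
    (hf : ∀ w : Fin m → ℝ,
      f w = (1 / 2) * (w ⬝ᵥ C.mulVec w)
        - ∑ i ∈ univ.filter (fun i : Fin m => (i : ℕ) < k),
            (w ⬝ᵥ C.mulVec (v i)) ^ 2 / (2 * lam i)) :
    ∀ w : Fin m → ℝ, w ⬝ᵥ w = 1 →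
      ((∀ u : Fin m → ℝ, u ⬝ᵥ u = 1 → f u ≤ f w) ↔
        (w = v ⟨k, hkm⟩ ∨ w = -v ⟨k, hkm⟩)) :=
  simple_hebbian_pca_objective_unique_max_general C v lam horth heig k hkm hgap hposk f hf
end
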